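/- For nonnegative integers a, b, c, d and a commutative ring R of characteristic 0, define the derivation v_{a,b} on R[x,y] by v_{a,b} = x^a y^b·((b+1)·x·∂_x − (a+1)·y·∂_y). Then the Lie bracket satisfies [v_{a,b}, v_{c,d}] = ((b+1)(c+1) − (a+1)(d+1)) · v_{a+c, b+d}. -/
import Mathlib


open MvPolynomial

/-- The generating vector field `v_{a,b} = x^a y^b ((b+1) x ∂_x − (a+1) y ∂_y)` of the
Landau–Ginzburg wall-crossing Lie algebra, as a linear endomorphism of `ℚ[x,y]`. -/
noncomputable def wcVF (a b : ℕ) : Module.End ℚ (MvPolynomial (Fin 2) ℚ) :=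
  ((b : ℚ) + 1) •
      ((LinearMap.mulLeft ℚ (X 0 ^ (a + 1) * X 1 ^ b)).comp
        (pderiv 0 : Derivation ℚ (MvPolynomial (Fin 2) ℚ) (MvPolynomial (Fin 2) ℚ)).toLinearMap)
  - ((a : ℚ) + 1) •
      ((LinearMap.mulLeft ℚ (X 0 ^ a * X 1 ^ (b + 1))).comp
        (pderiv 1 : Derivation ℚ (MvPolynomial (Fin 2) ℚ) (MvPolynomial (Fin 2) ℚ)).toLinearMap)

/-- The same vector field, as a derivation. -/
noncomputable def wcD (a b : ℕ) :
    Derivation ℚ (MvPolynomial (Fin 2) ℚ) (MvPolynomial (Fin 2) ℚ) :=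
  (((b : ℚ) + 1) • (X 0 ^ (a + 1) * X 1 ^ b : MvPolynomial (Fin 2) ℚ)) •
      (pderiv 0 : Derivation ℚ (MvPolynomial (Fin 2) ℚ) (MvPolynomial (Fin 2) ℚ))
  - (((a : ℚ) + 1) • (X 0 ^ a * X 1 ^ (b + 1) : MvPolynomial (Fin 2) ℚ)) •
      (pderiv 1 : Derivation ℚ (MvPolynomial (Fin 2) ℚ) (MvPolynomial (Fin 2) ℚ))

lemma wcD_coe (a b : ℕ) :
    ((wcD a b : Derivation ℚ (MvPolynomial (Fin 2) ℚ) (MvPolynomial (Fin 2) ℚ)) :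
      Module.End ℚ (MvPolynomial (Fin 2) ℚ)) = wcVF a b := by
  ext f
  simp [wcD, wcVF, smul_mul_assoc, mul_assoc]

lemma wcD_apply (a b m n : ℕ) :
    wcD a b ((X 0 : MvPolynomial (Fin 2) ℚ) ^ m * X 1 ^ n) =
      (((b : ℚ) + 1) * m - ((a : ℚ) + 1) * n) • (X 0 ^ (a + m) * X 1 ^ (b + n)) := by
  cases m with
  | zero =>
    cases n with
    | zero => simp [wcD]
    | succ n =>
      simp only [wcD, Derivation.sub_apply, Derivation.smul_apply, Derivation.leibniz,
        pderiv_pow, pderiv_X_self, pderiv_X_of_ne (by decide : (1:Fin 2) ≠ 0),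
        pderiv_X_of_ne (by decide : (0:Fin 2) ≠ 1)]
      simp only [smul_eq_mul, smul_zero, mul_zero, smul_eq_C_mul, map_sub, map_mul, map_add, map_one, map_natCast]
      push_cast
      ring
  | succ m =>
    cases n with
    | zero =>
      simp only [wcD, Derivation.sub_apply, Derivation.smul_apply, Derivation.leibniz,
        pderiv_pow, pderiv_X_self, pderiv_X_of_ne (by decide : (1:Fin 2) ≠ 0),
        pderiv_X_of_ne (by decide : (0:Fin 2) ≠ 1)]
      simp only [smul_eq_mul, smul_zero, mul_zero, smul_eq_C_mul, map_sub, map_mul, map_add, map_one, map_natCast]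
      push_cast
      ring
    | succ n =>
      simp only [wcD, Derivation.sub_apply, Derivation.smul_apply, Derivation.leibniz,
        pderiv_pow, pderiv_X_self, pderiv_X_of_ne (by decide : (1:Fin 2) ≠ 0),
        pderiv_X_of_ne (by decide : (0:Fin 2) ≠ 1)]
      simp only [smul_eq_mul, smul_zero, mul_zero, smul_eq_C_mul, map_sub, map_mul, map_add, map_one, map_natCast]
      push_cast
      ring

lemma wcD_bracket (a b c d : ℕ) :
    ⁅wcD a b, wcD c d⁆ =
      (((b : ℚ) + 1) * ((c : ℚ) + 1) - ((a : ℚ) + 1) * ((d : ℚ) + 1)) •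
        wcD (a + c) (b + d) := by
  apply derivation_ext
  intro i
  fin_cases i <;> beta_reduce
  · have h1 : (X 0 : MvPolynomial (Fin 2) ℚ) = X 0 ^ 1 * X 1 ^ 0 := by simp
    simp only [Fin.zero_eta, Fin.mk_one]
    rw [Derivation.commutator_apply, Derivation.smul_apply, h1, wcD_apply, wcD_apply,
      Derivation.map_smul, Derivation.map_smul, wcD_apply, wcD_apply, wcD_apply]
    simp only [smul_eq_C_mul, map_sub, map_mul, map_add, map_one, map_natCast]
    push_cast
    ring
  · have h1 : (X 1 : MvPolynomial (Fin 2) ℚ) = X 0 ^ 0 * X 1 ^ 1 := by simp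
    simp only [Fin.zero_eta, Fin.mk_one]
    rw [Derivation.commutator_apply, Derivation.smul_apply, h1, wcD_apply, wcD_apply,
      Derivation.map_smul, Derivation.map_smul, wcD_apply, wcD_apply, wcD_apply]
    simp only [smul_eq_C_mul, map_sub, map_mul, map_add, map_one, map_natCast]
    push_cast
    ring

/-- Structure constants of the wall-crossing Lie algebra:
`[v_{a,b}, v_{c,d}] = ((b+1)(c+1) − (a+1)(d+1)) v_{a+c,b+d}`. -/
theorem wcVF_bracket (a b c d : ℕ) :
    ⁅wcVF a b, wcVF c d⁆ =
      (((b : ℚ) + 1) * ((c : ℚ) + 1) - ((a : ℚ) + 1) * ((d : ℚ) + 1)) •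
        wcVF (a + c) (b + d) := by
  rw [← wcD_coe, ← wcD_coe, ← Derivation.commutator_coe_linear_map, wcD_bracket,
    Derivation.coe_smul_linearMap, wcD_coe]
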